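/- arXiv:1708.03014 — 2 statements merged into one kernel-verified Lean document; each statement's English description precedes it below -/
import Mathlib

section
/- In the symmetric group S_n with Coxeter generators s_1,...,s_{n-1}, let W_{(i),0} be the parabolic subgroup generated by {s_j : j ≠ i} (isomorphic to S_i × S_{n-i}), let w_{(i),∘} be its longest element, and let w_∘ be the longest element of S_n. Let ω̄ = s_{n-1}···s_1. Then ω̄^{-i} = w_{(i),∘} w_∘; moreover ω̄^{i} satisfies ℓ(ω̄^{i} s_j) > ℓ(ω̄^{i}) for all j ≠ i, i.e., ω̄^{i} is a minimal-length coset representative for S_n/W_{(i),0}. -/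
def invCount {n : ℕ} (w : Equiv.Perm (Fin n)) : ℕ :=
  (Finset.univ.filter fun p : Fin n × Fin n => p.1 < p.2 ∧ w p.2 < w p.1).card

lemma swap_val_adj {n : ℕ} {a b : Fin n} (hab : (a:ℕ)+1 = b) (x : Fin n) :
    ((Equiv.swap a b) x : ℕ) = if (x:ℕ) = a then (b:ℕ) else if (x:ℕ) = b then (a:ℕ) else x := by
  rcases eq_or_ne x a with h | h
  · rw [h, Equiv.swap_apply_left, if_pos rfl]
  · rcases eq_or_ne x b with h' | h'
    · rw [h', Equiv.swap_apply_right, if_neg (by omega), if_pos rfl]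
    · rw [Equiv.swap_apply_of_ne_of_ne h h',
        if_neg (fun hq => h (Fin.ext hq)), if_neg (fun hq => h' (Fin.ext hq))]

lemma swap_adj_lt {n : ℕ} {a b p q : Fin n} (hab : (a:ℕ)+1 = b) (hpq : p < q)
    (hne : ¬(p = a ∧ q = b)) : Equiv.swap a b p < Equiv.swap a b q := by
  have hne' : ¬((p:ℕ) = a ∧ (q:ℕ) = b) := fun ⟨h1,h2⟩ => hne ⟨Fin.ext h1, Fin.ext h2⟩
  rw [Fin.lt_def] at hpq ⊢
  rw [swap_val_adj hab, swap_val_adj hab]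
  split_ifs <;> omega

lemma invCount_mul_swap {n : ℕ} (w : Equiv.Perm (Fin n)) (a b : Fin n)
    (hab : (a:ℕ) + 1 = b) (hw : w a < w b) :
    invCount (w * Equiv.swap a b) = invCount w + 1 := by
  classical
  have hab' : a < b := by rw [Fin.lt_def]; omega
  set σ := Equiv.swap a b with hσ
  have hσs : ∀ x, σ (σ x) = x := fun x => Equiv.swap_apply_self a b x
  have hnotT : (a,b) ∉ Finset.univ.filter
      fun p : Fin n × Fin n => p.1 < p.2 ∧ w p.2 < w p.1 := by
    simp only [Finset.mem_filter, Finset.mem_univ, true_and, not_and]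
    exact fun _ h => absurd hw (not_lt.2 h.le)
  have hσa : σ a = b := Equiv.swap_apply_left a b
  have hσb : σ b = a := Equiv.swap_apply_right a b
  have hne_aux : ∀ p : Fin n × Fin n, p.1 < p.2 → (σ p.1, σ p.2) ≠ (a,b) := by
    intro p hlt he
    have h1 : σ p.1 = a := congrArg Prod.fst he
    have h2 : σ p.2 = b := congrArg Prod.snd he
    have e1 : p.1 = b := by rw [← hσa, ← h1, hσs]
    have e2 : p.2 = a := by rw [← hσb, ← h2, hσs]
    rw [e1, e2, Fin.lt_def] at hlt
    omega
  rw [invCount, invCount, ← Finset.card_insert_of_notMem hnotT]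
  apply Finset.card_nbij' (fun p => if p = (a,b) then (a,b) else (σ p.1, σ p.2))
    (fun q => if q = (a,b) then (a,b) else (σ q.1, σ q.2))
  · intro p hp
    simp only [Finset.mem_coe, Finset.mem_filter, Finset.mem_univ, true_and] at hp
    by_cases h : p = (a,b)
    · simp [h]
    · beta_reduce; rw [if_neg h]
      simp only [Finset.mem_coe, Finset.mem_insert, Finset.mem_filter, Finset.mem_univ, true_and]
      right
      refine ⟨swap_adj_lt hab hp.1 ?_, ?_⟩
      · intro ⟨h1, h2⟩; exact h (Prod.ext h1 h2)
      · simpa using hp.2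
  · intro q hq
    simp only [Finset.mem_coe, Finset.mem_insert, Finset.mem_filter, Finset.mem_univ, true_and] at hq
    rcases eq_or_ne q (a,b) with rfl | h
    · beta_reduce; rw [if_pos rfl]
      simp only [Finset.mem_coe, Finset.mem_filter, Finset.mem_univ, true_and]
      refine ⟨hab', ?_⟩
      simpa [hσb, hσa] using hw
    · rcases hq with rfl | hq
      · exact absurd rfl h
      beta_reduce; rw [if_neg h]
      simp only [Finset.mem_coe, Finset.mem_filter, Finset.mem_univ, true_and]
      refine ⟨swap_adj_lt hab hq.1 ?_, ?_⟩
      · intro ⟨h1, h2⟩; exact h (Prod.ext h1 h2)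
      · simpa [hσs] using hq.2
  · intro p hp
    simp only [Finset.mem_coe, Finset.mem_filter, Finset.mem_univ, true_and] at hp
    by_cases h : p = (a,b)
    · simp [h]
    · beta_reduce; rw [if_neg h, if_neg (hne_aux p hp.1), hσs, hσs]
  · intro q hq
    simp only [Finset.mem_coe, Finset.mem_insert, Finset.mem_filter, Finset.mem_univ, true_and] at hq
    rcases eq_or_ne q (a,b) with rfl | h
    · simp
    · rcases hq with rfl | hq
      · exact absurd rfl h
      beta_reduce; rw [if_neg h, if_neg (hne_aux q hq.1), hσs, hσs]

lemma finRotate_pow_val {m : ℕ} (k : ℕ) (x : Fin (m+1)) :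
    (((finRotate (m+1))^k) x : ℕ) = (x + k) % (m+1) := by
  induction k with
  | zero => simp [Nat.mod_eq_of_lt x.isLt]
  | succ k ih =>
    rw [pow_succ', Equiv.Perm.mul_apply, finRotate_succ_apply, Fin.val_add, ih, Fin.val_one',
      ← Nat.add_mod, Nat.add_assoc]

/-- With ω̄ the n-cycle j ↦ j−1 (so ω̄⁻¹ = finRotate n), for 1 ≤ i ≤ n−1:
ω̄^{-i} = w_{(i),∘} · w_∘, where w_∘ is the longest element (the reversal) and
w_{(i),∘} is the longest element of the parabolic subgroup S_i × S_{n-i}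
(reversing each of the two blocks, written 0-indexed); moreover ω̄^{i} is a
minimal coset representative for S_n/W_{(i),0}: ℓ(ω̄^i s_j) > ℓ(ω̄^i) for all j ≠ i. -/
theorem stmt_3 (n i : ℕ) (hi1 : 1 ≤ i) (hi2 : i ≤ n - 1)
    (w0 wI : Equiv.Perm (Fin n))
    (hw0 : ∀ j : Fin n, w0 j = j.rev)
    (hwI : ∀ j : Fin n,
      ((wI j : ℕ)) = if (j : ℕ) < i then i - 1 - (j : ℕ) else n - 1 + i - (j : ℕ)) :
    (finRotate n) ^ i = wI * w0 ∧
    ∀ (j : ℕ) (hj1 : 1 ≤ j) (hj2 : j ≤ n - 1) (_ : j ≠ i),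
      invCount (((finRotate n)⁻¹) ^ i *
          Equiv.swap (⟨j - 1, by omega⟩ : Fin n) (⟨j, by omega⟩ : Fin n)) >
        invCount (((finRotate n)⁻¹) ^ i) := by
  obtain ⟨m, rfl⟩ : ∃ m, n = m + 1 := ⟨n - 1, by omega⟩
  have him : i ≤ m := by omega
  have modfact : ∀ x : ℕ, x < 2*(m+1) → x % (m+1) = if x < m+1 then x else x - (m+1) := by
    intro x hx
    split_ifs with h
    · exact Nat.mod_eq_of_lt h
    · rw [Nat.mod_eq_sub_mod (by omega), Nat.mod_eq_of_lt (by omega)]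
  have hvval : ∀ x : Fin (m+1), ((((finRotate (m+1))⁻¹)^i) x : ℕ) = (x + (m+1) - i) % (m+1) := by
    intro x
    have hlt : ((x:ℕ) + (m+1) - i) % (m+1) < m+1 := Nat.mod_lt _ (by omega)
    have hfwd : ((finRotate (m+1))^i) ⟨_, hlt⟩ = x := by
      apply Fin.ext
      rw [finRotate_pow_val]
      show (((x:ℕ) + (m+1) - i) % (m+1) + i) % (m+1) = x
      rw [Nat.mod_add_mod]
      have : (x:ℕ) + (m+1) - i + i = (x:ℕ) + (m+1) := by omega
      rw [this, Nat.add_mod_right, Nat.mod_eq_of_lt x.isLt]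
    have : (((finRotate (m+1))⁻¹)^i) x = ⟨_, hlt⟩ := by
      rw [inv_pow]
      exact Equiv.Perm.inv_eq_iff_eq.mpr hfwd.symm
    rw [this]
  constructor
  · apply Equiv.ext
    intro x
    apply Fin.ext
    rw [finRotate_pow_val, Equiv.Perm.mul_apply, hw0, hwI, Fin.val_rev,
      modfact _ (by omega)]
    have := x.isLt
    split_ifs <;> omega
  · intro j hj1 hj2 hjne
    rw [invCount_mul_swap _ _ _ (by simp; omega)]
    · omega
    · rw [Fin.lt_def, hvval, hvval]
      simp only
      rw [modfact _ (by omega), modfact _ (by omega)]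
      rcases Nat.lt_or_ge j i with h | h <;> split_ifs <;> omega
end

section
/- With notation as in the previous statement (type A_{n-1}, 1 ≤ i ≤ n−1), a permutation w ∈ S_n sends exactly one element of Φ⁺ \ Φ⁺_{(i)} = {e_j − e_k : 1 ≤ j ≤ i < k ≤ n} to a negative root if and only if w ∈ s_i · W_{(i),0}, where s_i = (i, i+1). Moreover, in that case the unique such element α satisfies w(α) = −α_i = e_{i+1} − e_i. -/
open Finset

private lemma card_filter_val_lt {n : ℕ} (a : ℕ) (ha : a ≤ n) :
    (univ.filter fun m : Fin n => (m : ℕ) < a).card = a := by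
  have h : (univ.filter fun m : Fin n => (m : ℕ) < a)
      = (Finset.range a).attachFin (fun m hm => lt_of_lt_of_le (mem_range.mp hm) ha) := by
    ext m
    simp [Finset.mem_attachFin]
  rw [h, Finset.card_attachFin, Finset.card_range]

private lemma card_filter_perm_lt {n : ℕ} (w : Equiv.Perm (Fin n)) (a : ℕ) (ha : a ≤ n) :
    (univ.filter fun k : Fin n => ((w k : Fin n) : ℕ) < a).card = a := by
  have h1 : (univ.filter fun k : Fin n => ((w k : Fin n) : ℕ) < a)
      = (univ.filter fun m : Fin n => (m : ℕ) < a).map w.symm.toEmbedding := by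
    ext k
    simp only [mem_filter, mem_univ, true_and, mem_map, Equiv.coe_toEmbedding]
    constructor
    · intro h; exact ⟨w k, h, w.symm_apply_apply k⟩
    · rintro ⟨m, hm, rfl⟩; simpa using hm
  rw [h1, Finset.card_map, card_filter_val_lt a ha]

private lemma lem_le {n i : ℕ} (hi : 1 ≤ i) (hin : i < n) (w : Equiv.Perm (Fin n))
    (hcard : (Finset.univ.filter fun p : Fin n × Fin n =>
        (p.1 : ℕ) < i ∧ i ≤ (p.2 : ℕ) ∧ w p.2 < w p.1).card = 1) :
    ∀ j : Fin n, (j : ℕ) < i → (w j : ℕ) ≤ i := by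
  by_contra hcon
  push_neg at hcon
  obtain ⟨j₀, hj₀, hwj₀⟩ := hcon
  set a : ℕ := (w j₀ : ℕ) with ha
  have han : a < n := (w j₀).isLt
  set s : Finset (Fin n) := univ.filter fun k : Fin n => ((w k : Fin n) : ℕ) < a with hs
  have hscard : s.card = a := card_filter_perm_lt w a han.le
  have hsplit := Finset.card_filter_add_card_filter_not
    (s := s) (p := fun k : Fin n => (k : ℕ) < i)
  have h1 : (s.filter fun k : Fin n => (k : ℕ) < i).card ≤ i - 1 := by
    have hsub : (s.filter fun k : Fin n => (k : ℕ) < i) ⊆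
        (univ.filter fun k : Fin n => (k : ℕ) < i).erase j₀ := by
      intro k hk
      simp only [hs, mem_filter, mem_univ, true_and] at hk
      simp only [mem_erase, mem_filter, mem_univ, true_and]
      refine ⟨fun hkj => ?_, hk.2⟩
      subst hkj; omega
    calc (s.filter fun k : Fin n => (k : ℕ) < i).card
        ≤ ((univ.filter fun k : Fin n => (k : ℕ) < i).erase j₀).card :=
          Finset.card_le_card hsub
      _ = i - 1 := by
          rw [Finset.card_erase_of_mem (by simp [hj₀]), card_filter_val_lt i hin.le]
  have h2 : 1 < (s.filter fun k : Fin n => ¬ (k : ℕ) < i).card := by omega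
  obtain ⟨k₁, hk₁, k₂, hk₂, hne⟩ := Finset.one_lt_card.mp h2
  simp only [hs, mem_filter, mem_univ, true_and, not_lt] at hk₁ hk₂
  have hmem : ∀ k : Fin n, (w k : ℕ) < a ∧ i ≤ (k : ℕ) →
      (j₀, k) ∈ (Finset.univ.filter fun p : Fin n × Fin n =>
        (p.1 : ℕ) < i ∧ i ≤ (p.2 : ℕ) ∧ w p.2 < w p.1) := by
    intro k hk
    simp only [mem_filter, mem_univ, true_and]
    exact ⟨hj₀, hk.2, by rw [Fin.lt_def]; omega⟩
  have : 1 < (Finset.univ.filter fun p : Fin n × Fin n =>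
      (p.1 : ℕ) < i ∧ i ≤ (p.2 : ℕ) ∧ w p.2 < w p.1).card :=
    Finset.one_lt_card.mpr ⟨(j₀, k₁), hmem k₁ ⟨hk₁.1, hk₁.2⟩, (j₀, k₂),
      hmem k₂ ⟨hk₂.1, hk₂.2⟩, by simp [hne]⟩
  omega

private lemma lem_P_of_card {n i : ℕ} (hi : 1 ≤ i) (hin : i < n) (w : Equiv.Perm (Fin n))
    (hcard : (Finset.univ.filter fun p : Fin n × Fin n =>
        (p.1 : ℕ) < i ∧ i ≤ (p.2 : ℕ) ∧ w p.2 < w p.1).card = 1) :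
    ∀ j : Fin n, (j : ℕ) < i → ((w j : ℕ) < i - 1 ∨ (w j : ℕ) = i) := by
  have hle := lem_le hi hin w hcard
  by_contra hcon
  push_neg at hcon
  obtain ⟨j₀, hj₀, hw1, hw2⟩ := hcon
  have hwj₀ : (w j₀ : ℕ) = i - 1 := by have := hle j₀ hj₀; omega
  by_cases hex : ∃ j₁ : Fin n, (j₁ : ℕ) < i ∧ (w j₁ : ℕ) = i
  · obtain ⟨j₁, hj₁, hwj₁⟩ := hex
    have hne01 : j₀ ≠ j₁ := by rintro rfl; omega
    have hi2 : 2 ≤ i := by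
      by_contra h'
      have h1 : j₀ = j₁ := by apply Fin.ext; omega
      exact hne01 h1
    set s : Finset (Fin n) := univ.filter fun k : Fin n => ((w k : Fin n) : ℕ) < i - 1 with hs
    have hscard : s.card = i - 1 := card_filter_perm_lt w (i - 1) (by omega)
    have hsplit := Finset.card_filter_add_card_filter_not
      (s := s) (p := fun k : Fin n => (k : ℕ) < i)
    have h1 : (s.filter fun k : Fin n => (k : ℕ) < i).card ≤ i - 2 := by
      have hsub : (s.filter fun k : Fin n => (k : ℕ) < i) ⊆
          ((univ.filter fun k : Fin n => (k : ℕ) < i).erase j₀).erase j₁ := by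
        intro k hk
        simp only [hs, mem_filter, mem_univ, true_and] at hk
        simp only [mem_erase, mem_filter, mem_univ, true_and]
        refine ⟨fun h => ?_, fun h => ?_, hk.2⟩
        · subst h; omega
        · subst h; omega
      have hj₀mem : j₀ ∈ univ.filter fun k : Fin n => (k : ℕ) < i := by simp [hj₀]
      have hj₁mem : j₁ ∈ (univ.filter fun k : Fin n => (k : ℕ) < i).erase j₀ := by
        simp [hj₁, Ne.symm hne01]
      calc (s.filter fun k : Fin n => (k : ℕ) < i).card
          ≤ (((univ.filter fun k : Fin n => (k : ℕ) < i).erase j₀).erase j₁).card :=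
            Finset.card_le_card hsub
        _ ≤ i - 2 := by
            rw [Finset.card_erase_of_mem hj₁mem, Finset.card_erase_of_mem hj₀mem,
              card_filter_val_lt i hin.le]
            omega
    have h2 : 0 < (s.filter fun k : Fin n => ¬ (k : ℕ) < i).card := by omega
    obtain ⟨k, hk⟩ := Finset.card_pos.mp h2
    simp only [hs, mem_filter, mem_univ, true_and, not_lt] at hk
    have hmem : ∀ j : Fin n, (j : ℕ) < i → (w k : ℕ) < (w j : ℕ) →
        (j, k) ∈ (Finset.univ.filter fun p : Fin n × Fin n =>
          (p.1 : ℕ) < i ∧ i ≤ (p.2 : ℕ) ∧ w p.2 < w p.1) := by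
      intro j hj hwj
      simp only [mem_filter, mem_univ, true_and]
      exact ⟨hj, hk.2, by rw [Fin.lt_def]; omega⟩
    have : 1 < (Finset.univ.filter fun p : Fin n × Fin n =>
        (p.1 : ℕ) < i ∧ i ≤ (p.2 : ℕ) ∧ w p.2 < w p.1).card :=
      Finset.one_lt_card.mpr ⟨(j₀, k), hmem j₀ hj₀ (by omega), (j₁, k),
        hmem j₁ hj₁ (by omega), by simp [hne01]⟩
    omega
  · push_neg at hex
    have hlt : ∀ j : Fin n, (j : ℕ) < i → (w j : ℕ) < i := by
      intro j hj
      have h1 := hle j hj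
      have h2 := hex j hj
      omega
    have himg : (univ.filter fun j : Fin n => (j : ℕ) < i).image w
        = univ.filter fun m : Fin n => (m : ℕ) < i := by
      apply Finset.eq_of_subset_of_card_le
      · intro m hm
        simp only [mem_image, mem_filter, mem_univ, true_and] at hm ⊢
        obtain ⟨j, hj, rfl⟩ := hm
        exact hlt j hj
      · rw [Finset.card_image_of_injective _ w.injective,
          card_filter_val_lt i hin.le]
    have hpos : 0 < (Finset.univ.filter fun p : Fin n × Fin n =>
        (p.1 : ℕ) < i ∧ i ≤ (p.2 : ℕ) ∧ w p.2 < w p.1).card := by omega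
    obtain ⟨p, hp⟩ := Finset.card_pos.mp hpos
    simp only [mem_filter, mem_univ, true_and, Fin.lt_def] at hp
    obtain ⟨hp1, hp2, hp3⟩ := hp
    have h4 : (w p.2 : ℕ) < i := lt_trans hp3 (hlt p.1 hp1)
    have h5 : w p.2 ∈ univ.filter fun m : Fin n => (m : ℕ) < i := by simp [h4]
    rw [← himg] at h5
    simp only [mem_image, mem_filter, mem_univ, true_and] at h5
    obtain ⟨j, hj, hje⟩ := h5
    have := w.injective hje
    subst this
    omega

private lemma lemP_filter {n i : ℕ} (hi : 1 ≤ i) (hin : i < n) (w : Equiv.Perm (Fin n))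
    (hP : ∀ j : Fin n, (j : ℕ) < i → ((w j : ℕ) < i - 1 ∨ (w j : ℕ) = i)) :
    (Finset.univ.filter fun p : Fin n × Fin n =>
        (p.1 : ℕ) < i ∧ i ≤ (p.2 : ℕ) ∧ w p.2 < w p.1)
      = {(w.symm ⟨i, hin⟩, w.symm ⟨i - 1, by omega⟩)} := by
  set T : Finset (Fin n) := (univ.filter fun j : Fin n => (j : ℕ) < i).image w with hTdef
  have hT : T = univ.filter fun m : Fin n => (m : ℕ) < i - 1 ∨ (m : ℕ) = i := by
    apply Finset.eq_of_subset_of_card_le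
    · intro m hm
      simp only [hTdef, mem_image, mem_filter, mem_univ, true_and] at hm ⊢
      obtain ⟨j, hj, rfl⟩ := hm
      exact hP j hj
    · have h1 : (univ.filter fun m : Fin n => (m : ℕ) < i - 1 ∨ (m : ℕ) = i)
          = insert (⟨i, hin⟩ : Fin n) (univ.filter fun m : Fin n => (m : ℕ) < i - 1) := by
        ext m
        simp only [mem_insert, mem_filter, mem_univ, true_and, Fin.ext_iff]
        omega
      rw [h1, Finset.card_insert_of_notMem (by simp),
        card_filter_val_lt (i - 1) (by omega),
        hTdef, Finset.card_image_of_injective _ w.injective, card_filter_val_lt i hin.le]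
      omega
  have hkT : ∀ k : Fin n, i ≤ (k : ℕ) → ¬ ((w k : ℕ) < i - 1 ∨ (w k : ℕ) = i) := by
    intro k hk hcon
    have : w k ∈ T := by rw [hT]; simp [hcon]
    simp only [hTdef, mem_image, mem_filter, mem_univ, true_and] at this
    obtain ⟨j, hj, hje⟩ := this
    have := w.injective hje
    omega
  have hj₀ : ((w.symm ⟨i, hin⟩ : Fin n) : ℕ) < i := by
    have : (⟨i, hin⟩ : Fin n) ∈ T := by rw [hT]; simp
    simp only [hTdef, mem_image, mem_filter, mem_univ, true_and] at this
    obtain ⟨j, hj, hje⟩ := this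
    rw [← hje, Equiv.symm_apply_apply]; exact hj
  have hk₀ : i ≤ ((w.symm ⟨i - 1, by omega⟩ : Fin n) : ℕ) := by
    by_contra h
    push_neg at h
    have := hP _ h
    rw [Equiv.apply_symm_apply] at this
    simp only at this
    omega
  ext p
  simp only [mem_filter, mem_univ, true_and, Finset.mem_singleton, Prod.ext_iff]
  constructor
  · rintro ⟨h1, h2, h3⟩
    rw [Fin.lt_def] at h3
    have hk := hkT p.2 h2
    push_neg at hk
    rcases hP p.1 h1 with h | h
    · omega
    · have hwp2 : (w p.2 : ℕ) = i - 1 := by omega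
      constructor
      · have : w p.1 = ⟨i, hin⟩ := Fin.ext h
        rw [← this, Equiv.symm_apply_apply]
      · have : w p.2 = ⟨i - 1, by omega⟩ := Fin.ext hwp2
        rw [← this, Equiv.symm_apply_apply]
  · rintro ⟨h1, h2⟩
    rw [h1, h2]
    refine ⟨hj₀, hk₀, ?_⟩
    rw [Equiv.apply_symm_apply, Equiv.apply_symm_apply, Fin.lt_def]
    simp only
    omega

/-- Type A_{n-1} (0-indexed): w sends exactly one root e_j − e_k with j < i ≤ k
(i.e. exactly one element of Φ⁺ \ Φ⁺_{(i)}) to a negative root iff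
w ∈ s_i · W_{(i),0}; moreover in that case the unique such root is mapped to
−α_i, i.e. w(j) = i and w(k) = i−1 (0-indexed). -/
theorem stmt_5 (n i : ℕ) (hi1 : 1 ≤ i) (hi2 : i ≤ n - 1) (w : Equiv.Perm (Fin n)) :
    ((Finset.univ.filter fun p : Fin n × Fin n =>
        (p.1 : ℕ) < i ∧ i ≤ (p.2 : ℕ) ∧ w p.2 < w p.1).card = 1 ↔
      ∃ u : Equiv.Perm (Fin n), (∀ j : Fin n, (j : ℕ) < i → ((u j : ℕ) < i)) ∧
        w = Equiv.swap (⟨i - 1, by omega⟩ : Fin n) (⟨i, by omega⟩ : Fin n) * u) ∧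
    ((Finset.univ.filter fun p : Fin n × Fin n =>
        (p.1 : ℕ) < i ∧ i ≤ (p.2 : ℕ) ∧ w p.2 < w p.1).card = 1 →
      ∀ p ∈ (Finset.univ.filter fun p : Fin n × Fin n =>
        (p.1 : ℕ) < i ∧ i ≤ (p.2 : ℕ) ∧ w p.2 < w p.1),
        w p.1 = (⟨i, by omega⟩ : Fin n) ∧ w p.2 = (⟨i - 1, by omega⟩ : Fin n)) := by
  have hin : i < n := by omega
  constructor
  · constructor
    · intro hcard
      have hP := lem_P_of_card hi1 hin w hcard
      refine ⟨Equiv.swap (⟨i - 1, by omega⟩ : Fin n) (⟨i, by omega⟩ : Fin n) * w, ?_, ?_⟩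
      · intro j hj
        simp only [Equiv.Perm.mul_apply]
        rcases hP j hj with h | h
        · rw [Equiv.swap_apply_of_ne_of_ne
            (by simp only [ne_eq, Fin.ext_iff]; omega)
            (by simp only [ne_eq, Fin.ext_iff]; omega)]
          omega
        · have hwj : w j = (⟨i, by omega⟩ : Fin n) := Fin.ext h
          rw [hwj, Equiv.swap_apply_right]
          simp only
          omega
      · rw [← mul_assoc, Equiv.swap_mul_self, one_mul]
    · rintro ⟨u, hu, rfl⟩
      have hP : ∀ j : Fin n, (j : ℕ) < i →
          ((((Equiv.swap (⟨i - 1, by omega⟩ : Fin n) (⟨i, by omega⟩ : Fin n) * u) j : Fin n) : ℕ)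
              < i - 1 ∨
            (((Equiv.swap (⟨i - 1, by omega⟩ : Fin n) (⟨i, by omega⟩ : Fin n) * u) j : Fin n) : ℕ)
              = i) := by
        intro j hj
        have hu' := hu j hj
        simp only [Equiv.Perm.mul_apply]
        by_cases h : (u j : ℕ) = i - 1
        · right
          have huj : u j = (⟨i - 1, by omega⟩ : Fin n) := Fin.ext h
          rw [huj, Equiv.swap_apply_left]
        · left
          rw [Equiv.swap_apply_of_ne_of_ne
            (by simp only [ne_eq, Fin.ext_iff]; omega)
            (by simp only [ne_eq, Fin.ext_iff]; omega)]
          omega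
      rw [lemP_filter hi1 hin _ hP]
      exact Finset.card_singleton _
  · intro hcard p hp
    have hP := lem_P_of_card hi1 hin w hcard
    rw [lemP_filter hi1 hin w hP, Finset.mem_singleton] at hp
    subst hp
    exact ⟨w.apply_symm_apply _, w.apply_symm_apply _⟩
end
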